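/- arXiv:1802.09368 — 2 statements merged into one kernel-verified Lean document; each statement's English description precedes it below -/
import Mathlib

section
/- Let a ∈ ℤ/nℤ with a² = 1. Set G = ℤ/nℤ × ℤ/nℤ and G₀ = {(x, ax) : x ∈ ℤ/nℤ}. With α(x,y) = (x, ax), β(x,y) = (ay, y), (x,y)·(ay,z) = (x,z), and i(x,y) = (ay, ax), and the componentwise additive group structure, (G, G₀) is a commutative group-groupoid (in particular the interchange law holds) and it is transitive. -/
/-- A groupoid `G` over a base `G₀` (Definition 2.1): surjective source and
target maps, a partial multiplication defined on composable pairs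
(`tgt x = src y`), an injective unit map and an inversion, satisfying
associativity, the identity laws and the inverse laws. -/
structure Gpd (G : Type*) (G₀ : Type*) where
  src : G → G₀
  tgt : G → G₀
  mul : (x : G) → (y : G) → tgt x = src y → G
  unit : G₀ → G
  inv : G → G
  src_surj : Function.Surjective src
  tgt_surj : Function.Surjective tgt
  unit_inj : Function.Injective unit
  src_unit : ∀ u, src (unit u) = u
  tgt_unit : ∀ u, tgt (unit u) = u
  src_inv : ∀ x, src (inv x) = tgt x
  tgt_inv : ∀ x, tgt (inv x) = src x
  assoc : ∀ x y z (h1 : tgt x = src y) (h2 : tgt y = src z)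
      (h3 : tgt (mul x y h1) = src z) (h4 : tgt x = src (mul y z h2)),
      mul (mul x y h1) z h3 = mul x (mul y z h2) h4
  unit_mul : ∀ x, mul (unit (src x)) x (tgt_unit (src x)) = x
  mul_unit : ∀ x, mul x (unit (tgt x)) (src_unit (tgt x)).symm = x
  inv_mul : ∀ x, mul (inv x) x (tgt_inv x) = unit (tgt x)
  mul_inv : ∀ x, mul x (inv x) (src_inv x).symm = unit (src x)
/-- The anchor map of a groupoid. -/
def Gpd.anchor {G G₀ : Type*} (𝒢 : Gpd G G₀) : G → G₀ × G₀ :=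
  fun x => (𝒢.src x, 𝒢.tgt x)

/-- A groupoid is transitive if its anchor map is surjective. -/
def Gpd.Transitive {G G₀ : Type*} (𝒢 : Gpd G G₀) : Prop :=
  Function.Surjective 𝒢.anchor
/-- A group-groupoid in the sense of Definition 2.4: the total space and the
base carry group structures (written additively, as `⊕` in the paper), the
structure maps `src`, `tgt`, `unit`, `inv` are group homomorphisms, and the
interchange law between the partial multiplication and the group operation
holds. -/
def IsGrpGpd {G G₀ : Type*} [AddGroup G] [AddGroup G₀] (𝒢 : Gpd G G₀) : Prop :=
  (∀ x y : G, 𝒢.src (x + y) = 𝒢.src x + 𝒢.src y) ∧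
  (∀ x y : G, 𝒢.tgt (x + y) = 𝒢.tgt x + 𝒢.tgt y) ∧
  (∀ u v : G₀, 𝒢.unit (u + v) = 𝒢.unit u + 𝒢.unit v) ∧
  (∀ x y : G, 𝒢.inv (x + y) = 𝒢.inv x + 𝒢.inv y) ∧
  (∀ x y z t (hxy : 𝒢.tgt x = 𝒢.src y) (hzt : 𝒢.tgt z = 𝒢.src t)
      (h : 𝒢.tgt (x + z) = 𝒢.src (y + t)),
      𝒢.mul x y hxy + 𝒢.mul z t hzt = 𝒢.mul (x + z) (y + t) h)

/-- The base `G₀ = {(x, a·x) : x ∈ ℤ/nℤ}` of the modular group-groupoid, as an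
additive subgroup of `ℤ/nℤ × ℤ/nℤ`. -/
def modBase (n : ℕ) (a : ZMod n) : AddSubgroup (ZMod n × ZMod n) where
  carrier := {p | p.2 = a * p.1}
  add_mem' := by
    intro p q hp hq
    simp only [Set.mem_setOf_eq] at *
    rw [Prod.snd_add, Prod.fst_add, hp, hq, mul_add]
  zero_mem' := by simp
  neg_mem' := by
    intro p hp
    simp only [Set.mem_setOf_eq] at *
    rw [Prod.snd_neg, Prod.fst_neg, hp, mul_neg]

/-- The modular groupoid `ℤₙ²(a)` (Example 3.2): `G = ℤ/nℤ × ℤ/nℤ` over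
`G₀ = {(x, a·x)}`, with `α (x,y) = (x, ax)`, `β (x,y) = (ay, y)`,
`(x,y) · (ay,z) = (x,z)` and `i (x,y) = (ay, ax)`. -/
def modGpd (n : ℕ) (a : ZMod n) (ha : a * a = 1) :
    Gpd (ZMod n × ZMod n) (modBase n a) where
  src p := ⟨(p.1, a * p.1), rfl⟩
  tgt p := ⟨(a * p.2, p.2), show p.2 = a * (a * p.2) by
    rw [← mul_assoc, ha, one_mul]⟩
  mul p q _ := (p.1, q.2)
  unit u := u.val
  inv p := (a * p.2, a * p.1)
  src_surj u := ⟨u.val, Subtype.ext (Prod.ext rfl u.prop.symm)⟩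
  tgt_surj u := ⟨u.val, Subtype.ext (Prod.ext
    (show a * u.val.2 = u.val.1 by rw [u.prop, ← mul_assoc, ha, one_mul]) rfl)⟩
  unit_inj _ _ h := Subtype.ext h
  src_unit u := Subtype.ext (Prod.ext rfl u.prop.symm)
  tgt_unit u := Subtype.ext (Prod.ext
    (show a * u.val.2 = u.val.1 by rw [u.prop, ← mul_assoc, ha, one_mul]) rfl)
  src_inv p := Subtype.ext (Prod.ext rfl
    (show a * (a * p.2) = p.2 by rw [← mul_assoc, ha, one_mul]))
  tgt_inv p := Subtype.ext (Prod.ext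
    (show a * (a * p.1) = p.1 by rw [← mul_assoc, ha, one_mul]) rfl)
  assoc _ _ _ _ _ _ _ := rfl
  unit_mul _ := rfl
  mul_unit _ := rfl
  inv_mul _ := rfl
  mul_inv _ := rfl

/-- For `a ∈ ℤ/nℤ` with `a² = 1`, the modular groupoid `ℤₙ²(a)` with the
componentwise additive group structure is a commutative group-groupoid
(in particular the interchange law holds), and it is transitive. -/
theorem stmt_15 (n : ℕ) (a : ZMod n) (ha : a * a = 1) :
    IsGrpGpd (modGpd n a ha) ∧
    (∀ x y : ZMod n × ZMod n, x + y = y + x) ∧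
    (modGpd n a ha).Transitive := by
  refine ⟨⟨?_, ?_, ?_, ?_, ?_⟩, fun x y => add_comm x y, ?_⟩
  · intro x y; exact Subtype.ext (Prod.ext rfl (mul_add a x.1 y.1))
  · intro x y; exact Subtype.ext (Prod.ext (mul_add a x.2 y.2) rfl)
  · intro u v; rfl
  · intro x y
    exact Prod.ext (mul_add a x.2 y.2) (mul_add a x.1 y.1)
  · intro x y z t _ _ _; rfl
  · intro ⟨u, v⟩
    refine ⟨(u.val.1, v.val.2), ?_⟩
    unfold Gpd.anchor modGpd
    refine Prod.ext (Subtype.ext (Prod.ext rfl u.prop.symm))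
      (Subtype.ext (Prod.ext ?_ rfl))
    show a * v.val.2 = v.val.1
    rw [v.prop, ← mul_assoc, ha, one_mul]
end

section
/- Let (G, α, β, m, ε, i, ⊕, G₀) be a transitive commutative group-groupoid with group unit e₀ ∈ G₀, and suppose the restriction of β to G^{e₀} = α⁻¹(e₀) is a split epimorphism of groups, with group-homomorphism section γ : G₀ → G^{e₀}. Then the map φ : G → G₀ × G(e₀) × G₀ given by φ(x) = (α(x), γ(α(x)) · x · γ(β(x))⁻¹, β(x)) is an isomorphism of group-groupoids from (G, G₀) onto the trivial group-groupoid B × A × B with A = G(e₀) (the isotropy group at e₀) and B = G₀. -/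
/-- A morphism of groupoids (Definition 2.2): a pair of maps commuting with
source and target and preserving the partial multiplication. -/
structure IsGpdHom {G G₀ G' G₀' : Type*} (𝒢 : Gpd G G₀) (𝒢' : Gpd G' G₀')
    (f : G → G') (f₀ : G₀ → G₀') : Prop where
  src_eq : ∀ x, 𝒢'.src (f x) = f₀ (𝒢.src x)
  tgt_eq : ∀ x, 𝒢'.tgt (f x) = f₀ (𝒢.tgt x)
  mul_eq : ∀ x y (h : 𝒢.tgt x = 𝒢.src y) (h' : 𝒢'.tgt (f x) = 𝒢'.src (f y)),
      f (𝒢.mul x y h) = 𝒢'.mul (f x) (f y) h'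
/-- The trivial group-groupoid `𝒢 = B × A × B` over `B`: `α (b₁,a,b₂) = b₁`,
`β (b₁,a,b₂) = b₂`, `ε b = (b, 0, b)`, `i (b₁,a,b₂) = (b₂, -a, b₁)` and
`(b₁,a₁,b₂) · (b₂,a₂,b₃) = (b₁, a₁ ⊕ a₂, b₃)`. -/
def trivGpd (A B : Type*) [AddGroup A] : Gpd (B × A × B) B where
  src x := x.1
  tgt x := x.2.2
  mul x y _ := (x.1, x.2.1 + y.2.1, y.2.2)
  unit b := (b, 0, b)
  inv x := (x.2.2, -x.2.1, x.1)
  src_surj b := ⟨(b, 0, b), rfl⟩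
  tgt_surj b := ⟨(b, 0, b), rfl⟩
  unit_inj _ _ h := congrArg Prod.fst h
  src_unit _ := rfl
  tgt_unit _ := rfl
  src_inv _ := rfl
  tgt_inv _ := rfl
  assoc x y z _ _ _ _ := by
    obtain ⟨b₁, a₁, b₂⟩ := x; obtain ⟨b₃, a₂, b₄⟩ := y; obtain ⟨b₅, a₃, b₆⟩ := z
    simp [add_assoc]
  unit_mul x := by obtain ⟨b₁, a, b₂⟩ := x; simp
  mul_unit x := by obtain ⟨b₁, a, b₂⟩ := x; simp
  inv_mul x := by obtain ⟨b₁, a, b₂⟩ := x; simp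
  mul_inv x := by obtain ⟨b₁, a, b₂⟩ := x; simp

/-- The isotropy group `G(e₀) = α⁻¹(e₀) ∩ β⁻¹(e₀)` at the group unit
`e₀ = 0` of the base, as an additive subgroup of `G`. -/
def isoSubgroup {G G₀ : Type*} [AddGroup G] [AddGroup G₀] (𝒢 : Gpd G G₀)
    (hs : ∀ x y : G, 𝒢.src (x + y) = 𝒢.src x + 𝒢.src y)
    (ht : ∀ x y : G, 𝒢.tgt (x + y) = 𝒢.tgt x + 𝒢.tgt y) :
    AddSubgroup G where
  carrier := {x | 𝒢.src x = 0 ∧ 𝒢.tgt x = 0}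
  add_mem' := by
    intro a b ha hb
    exact ⟨by rw [hs, ha.1, hb.1, add_zero], by rw [ht, ha.2, hb.2, add_zero]⟩
  zero_mem' := by
    constructor
    · have h := hs 0 0; rw [add_zero] at h; exact (left_eq_add.mp h)
    · have h := ht 0 0; rw [add_zero] at h; exact (left_eq_add.mp h)
  neg_mem' := by
    intro x hx
    have h0s : 𝒢.src 0 = 0 := by
      have h := hs 0 0; rw [add_zero] at h; exact (left_eq_add.mp h)
    have h0t : 𝒢.tgt 0 = 0 := by
      have h := ht 0 0; rw [add_zero] at h; exact (left_eq_add.mp h)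
    constructor
    · have h := hs (-x) x
      rw [neg_add_cancel, hx.1, add_zero, h0s] at h
      exact h.symm
    · have h := ht (-x) x
      rw [neg_add_cancel, hx.2, add_zero, h0t] at h
      exact h.symm

/-!
The interchange law forces the partial multiplication of a group-groupoid to be expressed
through the group law, `x · y = x - ε (β x) + y`, and hence `i x = ε (β x) - x + ε (α x)`.
In these terms `φ x` has middle component `γ (α x) - ε (α x) + x - γ (β x)`, which lies in
the isotropy group at `0` because `γ` is a section of `β` with values in `α⁻¹ 0`. The inverse
of `φ` is `(a, v, b) ↦ ε a - γ a + v + γ b`, and `φ` turns `x · y` into the product of the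
trivial groupoid because the terms `γ (β x) = γ (α y)` cancel.
-/

theorem Gpd.mul_congr {G G₀ : Type*} (𝒢 : Gpd G G₀) {x x' y y' : G}
    (hx : x = x') (hy : y = y') (h : 𝒢.tgt x = 𝒢.src y) (h' : 𝒢.tgt x' = 𝒢.src y') :
    𝒢.mul x y h = 𝒢.mul x' y' h' := by
  subst hx hy; rfl

def Gpd.twist {G G₀ : Type*} [AddGroup G] (𝒢 : Gpd G G₀) (γ : G₀ → G) (x : G) : G :=
  γ (𝒢.src x) - 𝒢.unit (𝒢.src x) + x - γ (𝒢.tgt x)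

namespace IsGrpGpd

section AddGroup

variable {G G₀ : Type*} [AddGroup G] [AddGroup G₀] {𝒢 : Gpd G G₀} (h : IsGrpGpd 𝒢)
include h

theorem tgt_zero : 𝒢.tgt 0 = 0 := map_zero (AddMonoidHom.mk' 𝒢.tgt h.2.1)

theorem unit_zero : 𝒢.unit 0 = 0 := map_zero (AddMonoidHom.mk' 𝒢.unit h.2.2.1)

theorem src_neg (x : G) : 𝒢.src (-x) = -𝒢.src x := map_neg (AddMonoidHom.mk' 𝒢.src h.1) x

theorem src_sub (x y : G) : 𝒢.src (x - y) = 𝒢.src x - 𝒢.src y :=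
  map_sub (AddMonoidHom.mk' 𝒢.src h.1) x y

theorem tgt_sub (x y : G) : 𝒢.tgt (x - y) = 𝒢.tgt x - 𝒢.tgt y :=
  map_sub (AddMonoidHom.mk' 𝒢.tgt h.2.1) x y

theorem zero_mul (z : G) (hz : 𝒢.tgt 0 = 𝒢.src z) : 𝒢.mul 0 z hz = z := by
  have h0 : (0 : G) = 𝒢.unit (𝒢.src z) := by rw [← hz, h.tgt_zero, h.unit_zero]
  rw [𝒢.mul_congr h0 rfl hz (𝒢.tgt_unit _)]
  exact 𝒢.unit_mul z

theorem mul_eq (x y : G) (hxy : 𝒢.tgt x = 𝒢.src y) :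
    𝒢.mul x y hxy = x - 𝒢.unit (𝒢.tgt x) + y := by
  set z := -𝒢.unit (𝒢.src y) + y
  have hz : 𝒢.tgt 0 = 𝒢.src z := by
    rw [h.tgt_zero, h.1, h.src_neg, 𝒢.src_unit, neg_add_cancel]
  have hsum : 𝒢.tgt (x + 0) = 𝒢.src (𝒢.unit (𝒢.tgt x) + z) := by
    rw [add_zero, h.1, ← hz, h.tgt_zero, add_zero, 𝒢.src_unit]
  -- interchange for `(x · ε (β x)) + (0 · z) = (x + 0) · (ε (β x) + z)`
  have key := h.2.2.2.2 x (𝒢.unit (𝒢.tgt x)) 0 z (𝒢.src_unit _).symm hz hsum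
  rw [𝒢.mul_unit, h.zero_mul,
    𝒢.mul_congr (add_zero x) (by rw [hxy, add_neg_cancel_left]) hsum hxy] at key
  rw [← key, hxy, sub_eq_add_neg, add_assoc]

theorem inv_eq (x : G) : 𝒢.inv x = 𝒢.unit (𝒢.tgt x) - x + 𝒢.unit (𝒢.src x) := by
  have hx := 𝒢.mul_inv x
  rw [h.mul_eq] at hx
  rw [← hx]
  simp [sub_eq_add_neg, add_assoc]

theorem src_mul (x y : G) (hxy : 𝒢.tgt x = 𝒢.src y) : 𝒢.src (𝒢.mul x y hxy) = 𝒢.src x := by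
  rw [h.mul_eq, h.1, h.src_sub, 𝒢.src_unit, hxy, sub_add_cancel]

theorem tgt_mul (x y : G) (hxy : 𝒢.tgt x = 𝒢.src y) : 𝒢.tgt (𝒢.mul x y hxy) = 𝒢.tgt y := by
  rw [h.mul_eq, h.2.1, h.tgt_sub, 𝒢.tgt_unit, sub_self, zero_add]

variable {γ : G₀ → G} (hγsrc : ∀ u, 𝒢.src (γ u) = 0) (hγtgt : ∀ u, 𝒢.tgt (γ u) = u)
include hγsrc hγtgt

theorem twist_eq_mul (x : G) (h1 : 𝒢.tgt (γ (𝒢.src x)) = 𝒢.src x)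
    (h2 : 𝒢.tgt (𝒢.mul (γ (𝒢.src x)) x h1) = 𝒢.src (𝒢.inv (γ (𝒢.tgt x)))) :
    𝒢.twist γ x = 𝒢.mul (𝒢.mul (γ (𝒢.src x)) x h1) (𝒢.inv (γ (𝒢.tgt x))) h2 := by
  rw [h.mul_eq, h.tgt_mul, h.inv_eq, h.mul_eq, h1, hγsrc, hγtgt, h.unit_zero, Gpd.twist]
  simp [sub_eq_add_neg, add_assoc]

theorem twist_mem (x : G) : 𝒢.twist γ x ∈ isoSubgroup 𝒢 h.1 h.2.1 := by
  constructor
  · simp [Gpd.twist, h.src_sub, h.1, hγsrc, 𝒢.src_unit]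
  · simp [Gpd.twist, h.tgt_sub, h.2.1, hγtgt, 𝒢.tgt_unit]

def trivialization (x : G) : G₀ × isoSubgroup 𝒢 h.1 h.2.1 × G₀ :=
  (𝒢.src x, ⟨𝒢.twist γ x, h.twist_mem hγsrc hγtgt x⟩, 𝒢.tgt x)

theorem trivialization_bijective : Function.Bijective (h.trivialization hγsrc hγtgt) := by
  refine Function.bijective_iff_has_inverse.mpr
    ⟨fun p => 𝒢.unit p.1 - γ p.1 + p.2.1 + γ p.2.2, fun x => ?_, ?_⟩
  · simp [trivialization, Gpd.twist, sub_eq_add_neg, add_assoc]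
  · rintro ⟨a, ⟨v, hv_src, hv_tgt⟩, b⟩
    have hsrc : 𝒢.src (𝒢.unit a - γ a + v + γ b) = a := by
      simp [h.1, h.src_sub, 𝒢.src_unit, hγsrc, hv_src]
    have htgt : 𝒢.tgt (𝒢.unit a - γ a + v + γ b) = b := by
      simp [h.2.1, h.tgt_sub, 𝒢.tgt_unit, hγtgt, hv_tgt]
    refine Prod.ext hsrc (Prod.ext (Subtype.ext ?_) htgt)
    change 𝒢.twist γ _ = v
    rw [Gpd.twist, hsrc, htgt]
    simp [sub_eq_add_neg, add_assoc]

theorem isGpdHom_trivialization :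
    IsGpdHom 𝒢 (trivGpd (isoSubgroup 𝒢 h.1 h.2.1) G₀) (h.trivialization hγsrc hγtgt) id := by
  refine ⟨fun _ => rfl, fun _ => rfl, fun x y hxy _ => ?_⟩
  refine Prod.ext (h.src_mul x y hxy) (Prod.ext (Subtype.ext ?_) (h.tgt_mul x y hxy))
  change 𝒢.twist γ (𝒢.mul x y hxy) = 𝒢.twist γ x + 𝒢.twist γ y
  rw [Gpd.twist, h.src_mul, h.tgt_mul, h.mul_eq, Gpd.twist, Gpd.twist, ← hxy]
  simp [sub_eq_add_neg, add_assoc]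

end AddGroup

theorem trivialization_add {G G₀ : Type*} [AddCommGroup G] [AddCommGroup G₀] {𝒢 : Gpd G G₀}
    (h : IsGrpGpd 𝒢) {γ : G₀ → G} (hγsrc : ∀ u, 𝒢.src (γ u) = 0)
    (hγtgt : ∀ u, 𝒢.tgt (γ u) = u) (hγadd : ∀ u v, γ (u + v) = γ u + γ v) (x y : G) :
    h.trivialization hγsrc hγtgt (x + y) =
      h.trivialization hγsrc hγtgt x + h.trivialization hγsrc hγtgt y := by
  refine Prod.ext (h.1 x y) (Prod.ext (Subtype.ext ?_) (h.2.1 x y))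
  simp only [trivialization, Gpd.twist, Prod.snd_add, Prod.fst_add, AddSubgroup.coe_add,
    h.1, h.2.1, h.2.2.1, hγadd]
  abel

end IsGrpGpd

theorem stmt_19_general {G G₀ : Type*} [AddCommGroup G] [AddCommGroup G₀]
    (𝒢 : Gpd G G₀) (h : IsGrpGpd 𝒢)
    (γ : G₀ → G)
    (hγsrc : ∀ u, 𝒢.src (γ u) = 0)
    (hγtgt : ∀ u, 𝒢.tgt (γ u) = u)
    (hγadd : ∀ u v, γ (u + v) = γ u + γ v) :
    ∃ φ : G → G₀ × (isoSubgroup 𝒢 h.1 h.2.1) × G₀,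
      (∀ x (h1 : 𝒢.tgt (γ (𝒢.src x)) = 𝒢.src x)
          (h2 : 𝒢.tgt (𝒢.mul (γ (𝒢.src x)) x h1) = 𝒢.src (𝒢.inv (γ (𝒢.tgt x)))),
        (φ x).1 = 𝒢.src x ∧
        ((φ x).2.1 : G) = 𝒢.mul (𝒢.mul (γ (𝒢.src x)) x h1) (𝒢.inv (γ (𝒢.tgt x))) h2 ∧
        (φ x).2.2 = 𝒢.tgt x) ∧
      Function.Bijective φ ∧
      IsGpdHom 𝒢 (trivGpd (↥(isoSubgroup 𝒢 h.1 h.2.1)) G₀) φ id ∧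
      (∀ x y : G, φ (x + y) = φ x + φ y) :=
  ⟨h.trivialization hγsrc hγtgt,
    fun x h1 h2 => ⟨rfl, h.twist_eq_mul hγsrc hγtgt x h1 h2, rfl⟩,
    h.trivialization_bijective hγsrc hγtgt,
    h.isGpdHom_trivialization hγsrc hγtgt,
    h.trivialization_add hγsrc hγtgt hγadd⟩

/-- Theorem 3.1: a transitive commutative group-groupoid `(G, G₀)` whose
target map restricted to `G^{e₀} = α⁻¹(e₀)` admits a group-homomorphism
section `γ : G₀ → G^{e₀}` is isomorphic, via
`φ x = (α x, γ (α x) · x · (γ (β x))⁻¹, β x)`, to the trivial group-groupoid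
`B × A × B` with `A = G(e₀)` the isotropy group at `e₀` and `B = G₀`. -/
theorem stmt_19 {G G₀ : Type*} [AddCommGroup G] [AddCommGroup G₀]
    (𝒢 : Gpd G G₀) (h : IsGrpGpd 𝒢) (htrans : 𝒢.Transitive)
    (γ : G₀ → G)
    (hγsrc : ∀ u, 𝒢.src (γ u) = 0)
    (hγtgt : ∀ u, 𝒢.tgt (γ u) = u)
    (hγadd : ∀ u v, γ (u + v) = γ u + γ v) :
    ∃ φ : G → G₀ × (isoSubgroup 𝒢 h.1 h.2.1) × G₀,
      (∀ x (h1 : 𝒢.tgt (γ (𝒢.src x)) = 𝒢.src x)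
          (h2 : 𝒢.tgt (𝒢.mul (γ (𝒢.src x)) x h1) = 𝒢.src (𝒢.inv (γ (𝒢.tgt x)))),
        (φ x).1 = 𝒢.src x ∧
        ((φ x).2.1 : G) = 𝒢.mul (𝒢.mul (γ (𝒢.src x)) x h1) (𝒢.inv (γ (𝒢.tgt x))) h2 ∧
        (φ x).2.2 = 𝒢.tgt x) ∧
      Function.Bijective φ ∧
      IsGpdHom 𝒢 (trivGpd (↥(isoSubgroup 𝒢 h.1 h.2.1)) G₀) φ id ∧
      (∀ x y : G, φ (x + y) = φ x + φ y) :=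
  stmt_19_general 𝒢 h γ hγsrc hγtgt hγadd
end
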